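/- arXiv:2004.11473 — 7 statements merged into one kernel-verified Lean document; each statement's English description precedes it below -/
import Mathlib

section
/- For integers 1 ≤ k ≤ d-1 and N > d, the Wendel probabilities satisfy P_{d,N} = 2^{-k}·∑_{j=0}^{k} binom(k,j)·P_{d-k+j, N-k}. -/
open Finset

lemma triangle_swap (F : ℕ → ℕ → ℝ) (d : ℕ) :
    ∑ i ∈ range d, ∑ p ∈ range (i + 1), F p (i - p)
      = ∑ p ∈ range d, ∑ q ∈ range (d - p), F p q := by
  induction d with
  | zero => simp
  | succ d ih =>
    rw [Finset.sum_range_succ, ih, Finset.sum_range_succ]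
    have h1 : ∀ p ∈ range d, ∑ q ∈ range (d + 1 - p), F p q
        = (∑ q ∈ range (d - p), F p q) + F p (d - p) := by
      intro p hp
      have hpd : p ≤ d := (Finset.mem_range.mp hp).le
      rw [show d + 1 - p = (d - p) + 1 by omega, Finset.sum_range_succ]
    rw [Finset.sum_range_succ (fun p => ∑ q ∈ range (d + 1 - p), F p q) d,
      Finset.sum_congr rfl h1, Finset.sum_add_distrib]
    simp [add_assoc]

lemma key (a b d : ℕ) (had : a < d) :
    ∑ i ∈ range d, ((a + b).choose i : ℝ)
      = ∑ j ∈ range (a + 1), (a.choose j : ℝ) *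
          ∑ q ∈ range (d - a + j), (b.choose q : ℝ) := by
  have h1 : ∀ i : ℕ, ((a + b).choose i : ℝ)
      = ∑ p ∈ range (i + 1), (a.choose p : ℝ) * (b.choose (i - p) : ℝ) := by
    intro i
    rw [Nat.add_choose_eq, Finset.Nat.sum_antidiagonal_eq_sum_range_succ_mk]
    push_cast
    rfl
  calc ∑ i ∈ range d, ((a + b).choose i : ℝ)
      = ∑ i ∈ range d, ∑ p ∈ range (i + 1), (a.choose p : ℝ) * (b.choose (i - p) : ℝ) :=
        Finset.sum_congr rfl (fun i _ => h1 i)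
    _ = ∑ p ∈ range d, ∑ q ∈ range (d - p), (a.choose p : ℝ) * (b.choose q : ℝ) :=
        triangle_swap (fun p q => (a.choose p : ℝ) * (b.choose q : ℝ)) d
    _ = ∑ p ∈ range (a + 1), ∑ q ∈ range (d - p), (a.choose p : ℝ) * (b.choose q : ℝ) := by
        refine (Finset.sum_subset (Finset.range_subset_range.mpr (by omega)) ?_).symm
        intro p _ hp
        have hap : a < p := by
          have := Finset.mem_range.not.mp hp; omega
        simp [Nat.choose_eq_zero_of_lt hap]
    _ = ∑ j ∈ range (a + 1), (a.choose j : ℝ) * ∑ q ∈ range (d - a + j), (b.choose q : ℝ) := by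
        rw [← Finset.sum_range_reflect]
        refine Finset.sum_congr rfl (fun j hj => ?_)
        have hja : j ≤ a := by have := Finset.mem_range.mp hj; omega
        rw [show a + 1 - 1 - j = a - j by omega, Nat.choose_symm hja,
          show d - (a - j) = d - a + j by omega, ← Finset.mul_sum]

/-- Wendel probability `P_{d,n} = 2^{-(n-1)}·∑_{i=0}^{d-1} binom(n-1,i)`. -/
noncomputable def wendelP (d n : ℕ) : ℝ :=
  (∑ i ∈ Finset.range d, ((n - 1).choose i : ℝ)) / 2 ^ (n - 1)

theorem wendelP_binomial_identity (d N k : ℕ) (hk1 : 1 ≤ k) (hk2 : k ≤ d - 1) (hdN : d < N) :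
    wendelP d N = 2 ^ (-(k : ℤ)) *
      ∑ j ∈ Finset.range (k + 1), (k.choose j : ℝ) * wendelP (d - k + j) (N - k) := by
  have hkd : k < d := by omega
  have hb : N - 1 = k + (N - 1 - k) := by omega
  have hnk : N - k - 1 = N - 1 - k := by omega
  unfold wendelP
  rw [hnk] at *
  have hkey := key k (N - 1 - k) d hkd
  rw [← hb] at hkey
  rw [hkey]
  have h2 : (2 : ℝ) ^ (N - 1) = 2 ^ k * 2 ^ (N - 1 - k) := by
    rw [← pow_add, ← hb]
  rw [h2, zpow_neg, zpow_natCast]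
  rw [Finset.sum_div, Finset.mul_sum]
  refine Finset.sum_congr rfl (fun j hj => ?_)
  have h2k : (2 : ℝ) ^ k ≠ 0 := by positivity
  have h2b : (2 : ℝ) ^ (N - 1 - k) ≠ 0 := by positivity
  field_simp
end

section
/- For integers 1 ≤ k ≤ d-1 and N > d, the ratio P_{d,N}/P_{d-k,N-k} equals 1 + A, where A = (2^{N-1}·P_{d-k,N-k})^{-1} · ∑_{j=1}^{k} binom(k,j)·∑_{m=0}^{j-1} binom(N-k-1, d-k+m). -/
open Finset


lemma swap_tri (F G : ℕ → ℕ) (d : ℕ) :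
    ∑ i ∈ range d, ∑ a ∈ range (i+1), F a * G (i - a)
      = ∑ a ∈ range d, F a * ∑ b ∈ range (d - a), G b := by
  induction d with
  | zero => simp
  | succ d ih =>
    rw [sum_range_succ, ih]
    conv_rhs => rw [sum_range_succ]
    have h1 : ∀ a ∈ range d, F a * ∑ b ∈ range (d + 1 - a), G b
        = F a * ∑ b ∈ range (d - a), G b + F a * G (d - a) := by
      intro a ha
      rw [mem_range] at ha
      have : d + 1 - a = (d - a) + 1 := by omega
      rw [this, sum_range_succ, mul_add]
    conv_rhs => rw [sum_congr rfl h1, sum_add_distrib]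
    rw [sum_range_succ, Nat.sub_self]
    have h2 : d + 1 - d = 1 := by omega
    rw [h2, sum_range_one]
    ring

lemma key_s4 (k c e : ℕ) (he : 1 ≤ e) :
    ∑ i ∈ range (k + e), (k + c).choose i
      = 2 ^ k * ∑ i ∈ range e, c.choose i
        + ∑ j ∈ Icc 1 k, k.choose j * ∑ m ∈ range j, c.choose (e + m) := by
  have h1 : ∀ i, (k + c).choose i = ∑ a ∈ range (i+1), k.choose a * c.choose (i - a) := by
    intro i
    rw [Nat.add_choose_eq, Finset.Nat.sum_antidiagonal_eq_sum_range_succ_mk]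
  calc ∑ i ∈ range (k + e), (k + c).choose i
      = ∑ i ∈ range (k + e), ∑ a ∈ range (i+1), k.choose a * c.choose (i - a) := by
        exact sum_congr rfl fun i _ => h1 i
    _ = ∑ a ∈ range (k + e), k.choose a * ∑ b ∈ range (k + e - a), c.choose b :=
        swap_tri _ _ _
    _ = ∑ a ∈ range (k + 1), k.choose a * ∑ b ∈ range (k + e - a), c.choose b := by
        refine (sum_subset (by intro x hx; simp at *; omega) ?_).symm
        intro a _ ha
        simp only [mem_range, not_lt] at ha
        rw [Nat.choose_eq_zero_of_lt (by omega), zero_mul]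
    _ = ∑ j ∈ range (k + 1), k.choose j * ∑ b ∈ range (e + j), c.choose b := by
        rw [← sum_range_reflect]
        refine sum_congr rfl fun j hj => ?_
        rw [mem_range] at hj
        have h2 : k + 1 - 1 - j = k - j := by omega
        have h3 : k + e - (k - j) = e + j := by omega
        rw [h2, h3, Nat.choose_symm (by omega)]
    _ = ∑ j ∈ range (k + 1), (k.choose j * ∑ b ∈ range e, c.choose b
          + k.choose j * ∑ m ∈ range j, c.choose (e + m)) := by
        refine sum_congr rfl fun j _ => ?_
        rw [sum_range_add, mul_add]
    _ = _ := by
        rw [sum_add_distrib, ← sum_mul, Nat.sum_range_choose, mul_comm]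
        congr 1
        rw [sum_range_succ']
        simp only [range_zero, sum_empty, mul_zero, add_zero]
        have : Icc 1 k = Ico 1 (k+1) := by exact (Finset.Ico_add_one_right_eq_Icc 1 k).symm
        rw [this, sum_Ico_eq_sum_range]
        simp [add_comm]


lemma key2 (k c e : ℕ) (he : 1 ≤ e) :
    (∑ i ∈ range (k+e), ((k+c).choose i : ℝ)) / 2^(k+c)
        / ((∑ i ∈ range e, (c.choose i : ℝ)) / 2^c)
      = 1 + (2^(k+c) * ((∑ i ∈ range e, (c.choose i : ℝ)) / 2^c))⁻¹ *
          ∑ j ∈ Icc 1 k, (k.choose j : ℝ) * ∑ m ∈ range j, (c.choose (e+m) : ℝ) := by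
  have hS : (0:ℝ) < ∑ i ∈ range e, (c.choose i : ℝ) := by
    have h0 : (0:ℕ) ∈ range e := mem_range.2 he
    have := single_le_sum (f := fun i => (c.choose i : ℝ))
      (fun i _ => by positivity) h0
    simpa using lt_of_lt_of_le one_pos (by simpa using this)
  have hT : (∑ i ∈ range (k+e), ((k+c).choose i : ℝ))
      = 2^k * (∑ i ∈ range e, (c.choose i : ℝ))
        + ∑ j ∈ Icc 1 k, (k.choose j : ℝ) * ∑ m ∈ range j, (c.choose (e+m) : ℝ) := by
    exact_mod_cast congrArg (Nat.cast : ℕ → ℝ) (key_s4 k c e he)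
  have h2c : (0:ℝ) < 2^c := by positivity
  have h2kc : (0:ℝ) < 2^(k+c) := by positivity
  rw [hT]
  field_simp
  ring

theorem wendelP_ratio (d N k : ℕ) (hk1 : 1 ≤ k) (hk2 : k ≤ d - 1) (hdN : d < N) :
    wendelP d N / wendelP (d - k) (N - k) =
      1 + (2 ^ (N - 1) * wendelP (d - k) (N - k))⁻¹ *
        ∑ j ∈ Finset.Icc 1 k, (k.choose j : ℝ) *
          ∑ m ∈ Finset.range j, ((N - k - 1).choose (d - k + m) : ℝ) := by
  have e1 : N - 1 = k + (N - k - 1) := by omega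
  have e4 : d - k = d - k := rfl
  have e3 : d = k + (d - k) := by omega
  simp only [wendelP]
  rw [e1]
  conv_lhs => rw [e3]
  simp only [Nat.add_sub_cancel_left]
  exact key2 k (N - k - 1) (d - k) (by omega)
end

section
/- Let n ∈ ℕ and m ∈ ℕ₀ with 2m < n+1. Then (1/binom(n,m+1))·∑_{j=0}^{m} binom(n,j) ≤ ((m+1)/(n−m)) · ((n−m+1)/(n−2m+1)) · (1 − (m/(n−m+1))^{m+1}). -/
lemma aux_bound (n m : ℕ) (hn : 1 ≤ n) (hm : 2 * m < n + 1) :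
    ∀ k ≤ m, (n.choose (m - k) : ℝ) ≤
      (n.choose (m + 1) : ℝ) * ((m + 1) / ((n : ℝ) - m)) *
        ((m : ℝ) / ((n : ℝ) - m + 1)) ^ k := by
  have hmn : m + 1 ≤ n := by omega
  have hnm : (0 : ℝ) < (n : ℝ) - m := by
    have : (m : ℝ) < n := by exact_mod_cast (by omega : m < n)
    linarith
  intro k hk
  induction k with
  | zero =>
    simp only [Nat.sub_zero, pow_zero, mul_one]
    have h := Nat.choose_succ_right_eq n m
    have hcast : (n.choose (m + 1) : ℝ) * (m + 1) = (n.choose m : ℝ) * ((n : ℝ) - m) := by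
      have : ((n - m : ℕ) : ℝ) = (n : ℝ) - m := by
        rw [Nat.cast_sub (by omega)]
      rw [← this]
      exact_mod_cast congrArg (Nat.cast (R := ℝ)) h
    rw [mul_div_assoc', le_div_iff₀ hnm]
    linarith [hcast]
  | succ k ih =>
    have hk' : k ≤ m := by omega
    have ih' := ih hk'
    have hj : m - (k + 1) + 1 = m - k := by omega
    set j := m - (k + 1) with hjdef
    have h := Nat.choose_succ_right_eq n j
    -- n.choose (j+1) * (j+1) = n.choose j * (n - j)
    have hnj : (0 : ℝ) < (n : ℝ) - j := by
      have : (j : ℝ) < n := by exact_mod_cast (by omega : j < n)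
      linarith
    have hcast : (n.choose (m - k) : ℝ) * ((j : ℝ) + 1) = (n.choose j : ℝ) * ((n : ℝ) - j) := by
      have h2 : ((n - j : ℕ) : ℝ) = (n : ℝ) - j := by rw [Nat.cast_sub (by omega)]
      rw [← hj, ← h2]
      exact_mod_cast congrArg (Nat.cast (R := ℝ)) h
    -- so choose j = choose (m-k) * (j+1)/(n-j)
    have hratio : ((j : ℝ) + 1) / ((n : ℝ) - j) ≤ (m : ℝ) / ((n : ℝ) - m + 1) := by
      have h1 : (j : ℝ) + 1 ≤ m := by exact_mod_cast (by omega : j + 1 ≤ m)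
      have h2 : (n : ℝ) - m + 1 ≤ (n : ℝ) - j := by
        have : (j : ℝ) ≤ (m : ℝ) - 1 := by
          have : (j : ℝ) + 1 ≤ m := h1
          linarith
        linarith
      have hpos : (0 : ℝ) < (n : ℝ) - m + 1 := by linarith
      apply div_le_div₀ (by positivity) h1 hpos h2
    have hcj : (n.choose j : ℝ) = (n.choose (m - k) : ℝ) * (((j : ℝ) + 1) / ((n : ℝ) - j)) := by
      field_simp
      linarith [hcast]
    rw [hcj, pow_succ, ← mul_assoc]
    have hb : (0 : ℝ) ≤ (n.choose (m + 1) : ℝ) * ((m + 1) / ((n : ℝ) - m)) *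
        ((m : ℝ) / ((n : ℝ) - m + 1)) ^ k := by positivity
    calc (n.choose (m - k) : ℝ) * (((j : ℝ) + 1) / ((n : ℝ) - j))
        ≤ ((n.choose (m + 1) : ℝ) * ((m + 1) / ((n : ℝ) - m)) *
            ((m : ℝ) / ((n : ℝ) - m + 1)) ^ k) * (((j : ℝ) + 1) / ((n : ℝ) - j)) := by
          apply mul_le_mul_of_nonneg_right ih' (by positivity)
      _ ≤ _ := by
          apply mul_le_mul_of_nonneg_left hratio hb

theorem binom_sum_upper (n m : ℕ) (hn : 1 ≤ n) (hm : 2 * m < n + 1) :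
    (∑ j ∈ Finset.range (m + 1), (n.choose j : ℝ)) / (n.choose (m + 1)) ≤
      ((m + 1) / ((n : ℝ) - m)) * (((n : ℝ) - m + 1) / ((n : ℝ) - 2 * m + 1)) *
        (1 - ((m : ℝ) / ((n : ℝ) - m + 1)) ^ (m + 1)) := by
  have hmn : m + 1 ≤ n := by omega
  have hC : (0 : ℝ) < (n.choose (m + 1) : ℝ) := by
    exact_mod_cast Nat.choose_pos hmn
  have hnm : (0 : ℝ) < (n : ℝ) - m := by
    have : (m : ℝ) < n := by exact_mod_cast (by omega : m < n)
    linarith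
  have hnm1 : (0 : ℝ) < (n : ℝ) - m + 1 := by linarith
  have h2m : (0 : ℝ) < (n : ℝ) - 2 * m + 1 := by
    have : (2 * m : ℝ) < (n : ℝ) + 1 := by exact_mod_cast hm
    push_cast at this ⊢
    linarith
  set r : ℝ := (m : ℝ) / ((n : ℝ) - m + 1) with hr
  have hr0 : 0 ≤ r := by positivity
  have hr1 : r < 1 := by
    rw [hr, div_lt_one hnm1]
    have : (2 * m : ℝ) < (n : ℝ) + 1 := by exact_mod_cast hm
    push_cast at this
    linarith
  -- reflect the sum
  have hsum : (∑ j ∈ Finset.range (m + 1), (n.choose j : ℝ)) =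
      ∑ k ∈ Finset.range (m + 1), (n.choose (m - k) : ℝ) := by
    rw [← Finset.sum_range_reflect]
    apply Finset.sum_congr rfl
    intro k hk
    congr 1 <;> omega
  have hbound : (∑ j ∈ Finset.range (m + 1), (n.choose j : ℝ)) ≤
      (n.choose (m + 1) : ℝ) * ((m + 1) / ((n : ℝ) - m)) * ∑ k ∈ Finset.range (m + 1), r ^ k := by
    rw [hsum, Finset.mul_sum]
    apply Finset.sum_le_sum
    intro k hk
    exact aux_bound n m hn hm k (by simpa [Nat.lt_succ_iff] using hk)
  have hgeom : ∑ k ∈ Finset.range (m + 1), r ^ k = (1 - r ^ (m + 1)) / (1 - r) := by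
    rw [geom_sum_eq (by linarith : r ≠ 1)]
    rw [div_eq_div_iff (by linarith) (by linarith)]
    all_goals ring
  have h1r : 1 - r = ((n : ℝ) - 2 * m + 1) / ((n : ℝ) - m + 1) := by
    rw [hr]
    field_simp
    ring
  rw [div_le_iff₀ hC]
  calc (∑ j ∈ Finset.range (m + 1), (n.choose j : ℝ))
      ≤ (n.choose (m + 1) : ℝ) * ((m + 1) / ((n : ℝ) - m)) * ((1 - r ^ (m + 1)) / (1 - r)) := by
        rw [← hgeom]; exact hbound
    _ = ((m + 1) / ((n : ℝ) - m)) * (((n : ℝ) - m + 1) / ((n : ℝ) - 2 * m + 1)) *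
          (1 - r ^ (m + 1)) * (n.choose (m + 1) : ℝ) := by
        rw [h1r]
        field_simp
end

section
/- Let n ∈ ℕ and m ∈ ℕ₀ with 2m = n+1. Then (1/binom(n,m+1))·∑_{j=0}^{m} binom(n,j) ≤ (m+1)²/(n−m). -/
theorem binom_sum_upper_central (n m : ℕ) (hn : 1 ≤ n) (hm : 2 * m = n + 1) :
    (∑ j ∈ Finset.range (m + 1), (n.choose j : ℝ)) / (n.choose (m + 1)) ≤
      ((m : ℝ) + 1) ^ 2 / ((n : ℝ) - m) := by
  rcases Nat.lt_or_ge m 2 with hm2 | hm2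
  · -- m ≤ 1, forces m = 1, n = 1
    interval_cases m
    · omega
    · have hn1 : n = 1 := by omega
      subst hn1
      simp [Finset.sum_range_succ]
  · have hn' : n = 2 * m - 1 := by omega
    have hmn : m + 1 ≤ n := by omega
    have hpos : 0 < n.choose (m + 1) := Nat.choose_pos hmn
    have hposR : (0 : ℝ) < n.choose (m + 1) := by exact_mod_cast hpos
    have hnm : (0 : ℝ) < (n : ℝ) - m := by
      have : m < n := by omega
      have := Nat.cast_lt (α := ℝ).2 this
      linarith
    -- each term ≤ choose n m
    have hmax : ∀ j ∈ Finset.range (m + 1), (n.choose j : ℝ) ≤ n.choose m := by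
      intro j _
      have h1 : n.choose j ≤ n.choose (n / 2) := Nat.choose_le_middle j n
      have h2 : n / 2 = m - 1 := by omega
      have h3 : n.choose (m - 1) = n.choose m := by
        have hd : n - m = m - 1 := by omega
        rw [← hd, Nat.choose_symm (by omega : m ≤ n)]
      rw [h2, h3] at h1
      exact_mod_cast h1
    have hsum : (∑ j ∈ Finset.range (m + 1), (n.choose j : ℝ)) ≤
        ((m : ℝ) + 1) * n.choose m := by
      calc (∑ j ∈ Finset.range (m + 1), (n.choose j : ℝ))
          ≤ ∑ j ∈ Finset.range (m + 1), (n.choose m : ℝ) :=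
            Finset.sum_le_sum hmax
        _ = ((m : ℝ) + 1) * n.choose m := by
            rw [Finset.sum_const, Finset.card_range]; ring
    have hkey : (n.choose (m + 1) : ℝ) * ((m : ℝ) + 1) =
        (n.choose m : ℝ) * ((n : ℝ) - m) := by
      have := Nat.choose_succ_right_eq n m
      have hc : ((n.choose (m + 1) * (m + 1) : ℕ) : ℝ) =
          ((n.choose m * (n - m) : ℕ) : ℝ) := by rw [this]
      push_cast [Nat.cast_sub (le_of_lt (by omega : m < n))] at hc
      linarith
    rw [div_le_div_iff₀ hposR hnm]
    have h0 : (0 : ℝ) ≤ (m : ℝ) + 1 := by positivity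
    calc (∑ j ∈ Finset.range (m + 1), (n.choose j : ℝ)) * ((n : ℝ) - m)
        ≤ (((m : ℝ) + 1) * n.choose m) * ((n : ℝ) - m) := by
          apply mul_le_mul_of_nonneg_right hsum (le_of_lt hnm)
      _ = ((m : ℝ) + 1) ^ 2 * n.choose (m + 1) := by
          nlinarith [hkey]
end

section
/- Let n ∈ ℕ, m ∈ ℕ₀ with 2m ≤ n+1, and let ℓ be an integer with 2 ≤ ℓ ≤ m. Then ((m−ℓ+1)/(n−2m+2ℓ−1)) · (1 − ((m−ℓ+1)/(n−m+ℓ))^{ℓ+1}) ≤ (1/binom(n,m+1))·∑_{j=0}^{m} binom(n,j). -/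
/-!
The ratio `C(n, k) / C(n, k + 1) = (k + 1) / (n - k)` increases with `k`, so for
`m - ℓ ≤ k ≤ m` it is at least its value `r = (m - ℓ + 1) / (n - m + ℓ)` at `k = m - ℓ`.
Hence `C(n, m - i) ≥ r ^ (i + 1) * C(n, m + 1)` for `i ≤ ℓ`, and the sum of these `ℓ + 1`
terms is at least `C(n, m + 1)` times `r + ⋯ + r ^ (ℓ + 1) = r / (1 - r) * (1 - r ^ (ℓ + 1))`,
where `r / (1 - r) = (m - ℓ + 1) / (n - 2m + 2ℓ - 1)`.
-/

open Finset

theorem div_one_sub_mul_one_sub_pow_eq_sum {K : Type*} [Field K] {r : K} (hr : r ≠ 1) (k : ℕ) :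
    r / (1 - r) * (1 - r ^ k) = ∑ i ∈ range k, r ^ (i + 1) := by
  have h1r : 1 - r ≠ 0 := sub_ne_zero.2 hr.symm
  rw [← mul_neg_geom_sum, ← mul_assoc, div_mul_cancel₀ r h1r, mul_sum]
  simp only [pow_succ']

theorem div_mul_choose_succ_le {K : Type*} [Field K] [LinearOrder K] [IsStrictOrderedRing K]
    {n j k : ℕ} (hjk : j ≤ k) (hkn : k < n) :
    ((j : K) + 1) / (n - j) * n.choose (k + 1) ≤ n.choose k := by
  have hrec : (n.choose (k + 1) : K) * (k + 1) = n.choose k * (n - k) := by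
    have h := congrArg (Nat.cast : ℕ → K) (Nat.choose_succ_right_eq n k)
    push_cast [Nat.cast_sub hkn.le] at h
    exact h
  have hjk' : (j : K) ≤ k := by exact_mod_cast hjk
  have hkn' : (k : K) < n := by exact_mod_cast hkn
  have hratio : ((j : K) + 1) / (n - j) * (n - k) ≤ k + 1 := by
    rw [div_mul_eq_mul_div, div_le_iff₀ (by linarith)]
    nlinarith
  refine le_of_mul_le_mul_right ?_ (by positivity : (0 : K) < k + 1)
  calc ((j : K) + 1) / (n - j) * n.choose (k + 1) * (k + 1)
      = n.choose k * (((j : K) + 1) / (n - j) * (n - k)) := by rw [mul_assoc, hrec]; ring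
    _ ≤ n.choose k * (k + 1) := by gcongr

theorem sum_range_reflect_le_of_le {M : Type*} [AddCommMonoid M] [PartialOrder M]
    [IsOrderedAddMonoid M] {f : ℕ → M} (hf : ∀ j, 0 ≤ f j) {ℓ m : ℕ} (h : ℓ ≤ m) :
    ∑ i ∈ range (ℓ + 1), f (m - i) ≤ ∑ j ∈ range (m + 1), f j := by
  calc ∑ i ∈ range (ℓ + 1), f (m - i)
      ≤ ∑ i ∈ range (m + 1), f (m - i) :=
        sum_le_sum_of_subset_of_nonneg (range_subset_range.2 (by omega)) fun _ _ _ => hf _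
    _ = ∑ j ∈ range (m + 1), f j := by simpa using sum_range_reflect f (m + 1)

theorem binom_sum_lower_general (n m ℓ : ℕ) (hm : 2 * m ≤ n + 1)
    (hℓ1 : 2 ≤ ℓ) (hℓ2 : ℓ ≤ m) :
    (((m : ℝ) - ℓ + 1) / ((n : ℝ) - 2 * m + 2 * ℓ - 1)) *
        (1 - (((m : ℝ) - ℓ + 1) / ((n : ℝ) - m + ℓ)) ^ (ℓ + 1)) ≤
      (∑ j ∈ Finset.range (m + 1), (n.choose j : ℝ)) / (n.choose (m + 1)) := by
  set r : ℝ := ((m : ℝ) - ℓ + 1) / ((n : ℝ) - m + ℓ) with hr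
  have hm' : (2 * m : ℝ) ≤ n + 1 := by exact_mod_cast hm
  have hℓ1' : (2 : ℝ) ≤ ℓ := by exact_mod_cast hℓ1
  have hℓ2' : (ℓ : ℝ) ≤ m := by exact_mod_cast hℓ2
  have hr0 : 0 ≤ r := div_nonneg (by linarith) (by linarith)
  have hr1 : r < 1 := (div_lt_one (by linarith)).2 (by linarith)
  have hcoef : ((m : ℝ) - ℓ + 1) / ((n : ℝ) - 2 * m + 2 * ℓ - 1) = r / (1 - r) := by
    rw [hr, one_sub_div (by linarith), div_div_div_cancel_right₀ (by linarith)]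
    ring_nf
  have hstep : ∀ i < ℓ + 1, r * n.choose (m + 1 - i) ≤ n.choose (m + 1 - (i + 1)) := by
    intro i hi
    have h := div_mul_choose_succ_le (K := ℝ) (j := m - ℓ) (k := m - i) (n := n)
      (by omega) (by omega)
    rw [Nat.cast_sub hℓ2, sub_sub_eq_add_sub, add_sub_right_comm,
      show m - i + 1 = m + 1 - i by omega] at h
    simpa [hr] using h
  have hdecay : ∀ i < ℓ + 1, r ^ (i + 1) * n.choose (m + 1) ≤ n.choose (m - i) := fun i hi => by
    simpa using geom_le (u := fun i => (n.choose (m + 1 - i) : ℝ)) hr0 (i + 1)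
      fun k hk => hstep k (by omega)
  have hchoose : (0 : ℝ) < n.choose (m + 1) := by exact_mod_cast Nat.choose_pos (by omega)
  rw [hcoef, div_one_sub_mul_one_sub_pow_eq_sum hr1.ne, le_div_iff₀ hchoose, sum_mul]
  calc ∑ i ∈ range (ℓ + 1), r ^ (i + 1) * n.choose (m + 1)
      ≤ ∑ i ∈ range (ℓ + 1), (n.choose (m - i) : ℝ) :=
        sum_le_sum fun i hi => hdecay i (mem_range.1 hi)
    _ ≤ ∑ j ∈ range (m + 1), (n.choose j : ℝ) :=
        sum_range_reflect_le_of_le (fun _ => Nat.cast_nonneg _) hℓ2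

theorem binom_sum_lower (n m ℓ : ℕ) (hn : 1 ≤ n) (hm : 2 * m ≤ n + 1)
    (hℓ1 : 2 ≤ ℓ) (hℓ2 : ℓ ≤ m) :
    (((m : ℝ) - ℓ + 1) / ((n : ℝ) - 2 * m + 2 * ℓ - 1)) *
        (1 - (((m : ℝ) - ℓ + 1) / ((n : ℝ) - m + ℓ)) ^ (ℓ + 1)) ≤
      (∑ j ∈ Finset.range (m + 1), (n.choose j : ℝ)) / (n.choose (m + 1)) :=
  binom_sum_lower_general n m ℓ hm hℓ1 hℓ2
end

section
/- Let n ∈ ℕ and m ∈ ℕ₀ with 2m ≤ n+1 and m ≤ n and m+1 ≤ n. Then (m+1)/(n−m) ≤ ((m+1)/(n−m))·((n+1)/(n+1−m)) ≤ (1/binom(n,m+1))·∑_{j=0}^{m} binom(n,j). -/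
theorem binom_sum_lower_simple (n m : ℕ) (hn : 1 ≤ n) (hm : 2 * m ≤ n + 1)
    (hmn : m ≤ n) (hmn' : m + 1 ≤ n) :
    ((m : ℝ) + 1) / ((n : ℝ) - m) ≤
        (((m : ℝ) + 1) / ((n : ℝ) - m)) * (((n : ℝ) + 1) / ((n : ℝ) + 1 - m)) ∧
      (((m : ℝ) + 1) / ((n : ℝ) - m)) * (((n : ℝ) + 1) / ((n : ℝ) + 1 - m)) ≤
        (∑ j ∈ Finset.range (m + 1), (n.choose j : ℝ)) / (n.choose (m + 1)) := by
  have hmn'' : (m : ℝ) < n := by exact_mod_cast hmn'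
  have h1 : (0 : ℝ) < (n : ℝ) - m := by linarith
  have h2 : (0 : ℝ) < (n : ℝ) + 1 - m := by linarith
  have hc : 0 < (n.choose (m + 1) : ℝ) := by
    exact_mod_cast Nat.choose_pos hmn'
  constructor
  · have : (1 : ℝ) ≤ ((n : ℝ) + 1) / ((n : ℝ) + 1 - m) := by
      rw [le_div_iff₀ h2]
      have : (0:ℝ) ≤ (m:ℝ) := Nat.cast_nonneg m
      linarith
    nlinarith [div_nonneg (by positivity : (0:ℝ) ≤ (m:ℝ)+1) h1.le]
  · -- key identity: LHS = choose(n+1) m / choose n (m+1)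
    have e1 : (n.choose (m + 1) : ℝ) * (m + 1) = n.choose m * ((n : ℝ) - m) := by
      have := Nat.choose_succ_right_eq n m
      have h := congrArg (Nat.cast : ℕ → ℝ) this
      push_cast [Nat.cast_sub hmn] at h
      linarith [h]
    have e2 : ((n + 1).choose m : ℝ) * ((n : ℝ) + 1 - m) = (n + 1) * n.choose m := by
      have ha := Nat.choose_succ_right_eq (n + 1) m
      have hb := Nat.add_one_mul_choose_eq n m
      have ha' := congrArg (Nat.cast : ℕ → ℝ) ha
      have hb' := congrArg (Nat.cast : ℕ → ℝ) hb
      push_cast [Nat.cast_sub (le_trans hmn (Nat.le_succ n))] at ha' hb'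
      -- ha' : (n+1).choose (m+1) * (m+1) = (n+1).choose m * (n+1-m)
      -- hb' : (n+1) * n.choose m = (n+1).choose (m+1) * (m+1)
      linarith [ha', hb']
    have key : (((m : ℝ) + 1) / ((n : ℝ) - m)) * (((n : ℝ) + 1) / ((n : ℝ) + 1 - m))
        = ((n + 1).choose m : ℝ) / (n.choose (m + 1) : ℝ) := by
      rw [div_mul_div_comm, div_eq_div_iff (by positivity) hc.ne']
      nlinarith [e1, e2]
    rw [key]
    have hsum : (n + 1).choose m ≤ ∑ j ∈ Finset.range (m + 1), n.choose j := by
      cases m with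
      | zero => simp
      | succ k =>
        rw [Nat.choose_succ_succ, Finset.sum_range_succ, Finset.sum_range_succ]
        simp only [Nat.succ_eq_add_one]; omega
    gcongr
    calc ((n + 1).choose m : ℝ) ≤ ((∑ j ∈ Finset.range (m + 1), n.choose j : ℕ) : ℝ) := by
          exact_mod_cast hsum
      _ = ∑ j ∈ Finset.range (m + 1), (n.choose j : ℝ) := by push_cast; rfl
end

section
/- Suppose d(j), N(j) are sequences of positive integers with d(j) ≤ N(j), d(j) → ∞, and d(j)/N(j) → δ as j → ∞, where 0 ≤ δ < 1/2. Then (1/binom(N(j)−1, d(j)−1))·∑_{i=0}^{d(j)-2} binom(N(j)−1, i) → δ/(1−2δ) as j → ∞. -/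
/-!
Write `n = N - 1`, `k = d - 1`. Read downwards from `i = k`, the consecutive ratios
`C(n, i - 1) / C(n, i) = i / (n - i + 1)` are at most `k / (n - k + 1) → r := δ / (1 - δ) < 1`,
and the `m`-th of them still tends to `r`. So the normalized sum `∑_{m=1}^{k} C(n, k - m) / C(n, k)`
is a series whose terms tend to `r ^ m` and are dominated by a geometric series; by Tannery's
theorem it tends to `r / (1 - r) = δ / (1 - 2δ)`.
-/

open Filter Finset

section RatioLimits

variable {α : Type*} {l : Filter α} {x y : α → ℝ} {c : ℝ}

theorem tendsto_sub_div_add_of_tendsto_div (hy : Tendsto y l atTop)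
    (h : Tendsto (fun j => x j / y j) l (nhds c)) (a b : ℝ) :
    Tendsto (fun j => (x j - a) / (y j + b)) l (nhds c) := by
  have hlim : Tendsto (fun j => (x j / y j - a / y j) / (1 + b / y j)) l
      (nhds ((c - 0) / (1 + 0))) :=
    (h.sub (tendsto_const_nhds.div_atTop hy)).div
      (tendsto_const_nhds.add (tendsto_const_nhds.div_atTop hy)) (by norm_num)
  rw [sub_zero, add_zero, div_one] at hlim
  refine hlim.congr' ?_
  filter_upwards [hy.eventually_gt_atTop 0] with j hj
  field_simp

theorem tendsto_sub_atTop_of_tendsto_div (hy : Tendsto y l atTop)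
    (h : Tendsto (fun j => x j / y j) l (nhds c)) (hc : c < 1) :
    Tendsto (fun j => y j - x j) l atTop := by
  refine (hy.atTop_mul_pos (sub_pos.2 hc) (tendsto_const_nhds.sub h)).congr' ?_
  filter_upwards [hy.eventually_gt_atTop 0] with j hj
  field_simp

theorem tendsto_div_sub_of_tendsto_div (hy : Tendsto y l atTop)
    (h : Tendsto (fun j => x j / y j) l (nhds c)) (hc : c ≠ 1) :
    Tendsto (fun j => x j / (y j - x j)) l (nhds (c / (1 - c))) := by
  refine (h.div (tendsto_const_nhds.sub h) (sub_ne_zero.2 hc.symm)).congr' ?_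
  filter_upwards [hy.eventually_gt_atTop 0] with j hj
  change x j / y j / (1 - x j / y j) = _
  rw [one_sub_div hj.ne', div_div_div_cancel_right₀ hj.ne']

end RatioLimits

/-- `C(n, k - m) / C(n, k)` as a product of consecutive ratios; the real subtraction makes the
factor at `l = k` vanish, so the finite sum over `m ≤ k` becomes a series. -/
noncomputable def chooseRatio (n k m : ℕ) : ℝ :=
  ∏ l ∈ range m, ((k : ℝ) - l) / (n - k + 1 + l)

theorem chooseRatio_eq_zero_of_lt {n k m : ℕ} (hkm : k < m) : chooseRatio n k m = 0 :=
  prod_eq_zero (mem_range.2 hkm) (by rw [sub_self, zero_div])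

theorem choose_eq_choose_succ_mul {n i : ℕ} (hi : i < n) :
    (n.choose i : ℝ) = n.choose (i + 1) * ((i + 1) / (n - i)) := by
  have h := congrArg (fun t : ℕ => (t : ℝ)) (Nat.choose_succ_right_eq n i)
  push_cast [Nat.cast_sub hi.le] at h
  have hpos : (0 : ℝ) < n - i := sub_pos.2 (by exact_mod_cast hi)
  field_simp
  linarith

theorem choose_sub_eq_mul_chooseRatio {n k m : ℕ} (hmk : m ≤ k) (hkn : k ≤ n) :
    (n.choose (k - m) : ℝ) = n.choose k * chooseRatio n k m := by
  induction m with
  | zero => simp [chooseRatio]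
  | succ m ih =>
    obtain ⟨i, hi⟩ : ∃ i, k - m = i + 1 := ⟨k - (m + 1), by omega⟩
    have hk : (k : ℝ) - m = i + 1 := by rw [← Nat.cast_sub (by omega), hi]; push_cast; ring
    have hn : (n : ℝ) - k + 1 + m = n - i := by linarith
    rw [chooseRatio, prod_range_succ, ← chooseRatio, ← mul_assoc, ← ih (by omega), hi, hk, hn,
      show k - (m + 1) = i by omega]
    exact choose_eq_choose_succ_mul (by omega)

theorem sum_range_choose_div_choose {n k : ℕ} (hkn : k ≤ n) :
    (∑ i ∈ range k, (n.choose i : ℝ)) / n.choose k = ∑' m, chooseRatio n k (m + 1) := by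
  have hchoose : (n.choose k : ℝ) ≠ 0 := by exact_mod_cast (Nat.choose_pos hkn).ne'
  rw [tsum_eq_sum (s := range k) fun m hm => chooseRatio_eq_zero_of_lt (by simp at hm; omega),
    ← sum_range_reflect, sum_div]
  refine sum_congr rfl fun m hm => ?_
  rw [show k - 1 - m = k - (m + 1) by omega,
    choose_sub_eq_mul_chooseRatio (by simp at hm; omega) hkn, mul_div_cancel_left₀ _ hchoose]

theorem abs_chooseRatio_le {n k : ℕ} (hkn : k ≤ n) (m : ℕ) :
    |chooseRatio n k m| ≤ ((k : ℝ) / (n - k + 1)) ^ m := by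
  have hgap : (0 : ℝ) < n - k + 1 := by
    have : (k : ℝ) ≤ n := by exact_mod_cast hkn
    linarith
  rcases le_or_gt m k with hmk | hkm
  · rw [chooseRatio, abs_prod]
    refine (prod_le_prod (fun _ _ => abs_nonneg _) fun l hl => ?_).trans_eq
      (by rw [prod_const, card_range])
    have hlk : (l : ℝ) ≤ k := by exact_mod_cast (mem_range.1 hl).le.trans hmk
    have hl0 : (0 : ℝ) ≤ l := l.cast_nonneg
    rw [abs_of_nonneg (div_nonneg (by linarith) (by linarith)),
      div_le_div_iff₀ (by linarith) hgap]
    nlinarith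
  · rw [chooseRatio_eq_zero_of_lt hkm, abs_zero]
    exact pow_nonneg (div_nonneg k.cast_nonneg hgap.le) m

theorem tendsto_tsum_chooseRatio {n k : ℕ → ℕ} {r : ℝ} (hkn : ∀ j, k j ≤ n j)
    (hgap : Tendsto (fun j => (n j : ℝ) - k j + 1) atTop atTop)
    (hratio : Tendsto (fun j => (k j : ℝ) / (n j - k j + 1)) atTop (nhds r))
    (hr0 : 0 ≤ r) (hr1 : r < 1) :
    Tendsto (fun j => ∑' m, chooseRatio (n j) (k j) (m + 1)) atTop (nhds (r / (1 - r))) := by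
  obtain ⟨s, hrs, hs1⟩ := exists_between hr1
  have hs0 : 0 ≤ s := hr0.trans hrs.le
  have hterm : ∀ m, Tendsto (fun j => chooseRatio (n j) (k j) m) atTop (nhds (r ^ m)) := by
    intro m
    have h := tendsto_finsetProd (range m) fun l _ =>
      tendsto_sub_div_add_of_tendsto_div hgap hratio (l : ℝ) l
    rwa [prod_const, card_range] at h
  have hbound : ∀ᶠ j in atTop, ∀ m, ‖chooseRatio (n j) (k j) (m + 1)‖ ≤ s ^ (m + 1) := by
    filter_upwards [hratio.eventually (eventually_lt_nhds hrs)] with j hj m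
    have hρ0 : (0 : ℝ) ≤ k j / (n j - k j + 1) := by
      have : (k j : ℝ) ≤ n j := by exact_mod_cast hkn j
      exact div_nonneg (k j).cast_nonneg (by linarith)
    exact (abs_chooseRatio_le (hkn j) _).trans (pow_le_pow_left₀ hρ0 hj.le _)
  have hsum : ∑' m, r ^ (m + 1) = r / (1 - r) := by
    simp_rw [pow_succ, tsum_mul_right, tsum_geometric_of_lt_one hr0 hr1, inv_mul_eq_div]
  rw [← hsum]
  exact tendsto_tsum_of_dominated_convergence
    ((summable_nat_add_iff 1).2 (summable_geometric_of_lt_one hs0 hs1)) (fun m => hterm _) hbound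

theorem binom_sum_ratio_limit (d N : ℕ → ℕ) (δ : ℝ)
    (hpos : ∀ j, 0 < d j) (hdN : ∀ j, d j ≤ N j)
    (hd : Tendsto (fun j => d j) atTop atTop)
    (hδ : Tendsto (fun j => (d j : ℝ) / (N j : ℝ)) atTop (nhds δ))
    (hδ0 : 0 ≤ δ) (hδhalf : δ < 1 / 2) :
    Tendsto (fun j =>
        (∑ i ∈ Finset.range (d j - 1), ((N j - 1).choose i : ℝ)) /
          ((N j - 1).choose (d j - 1) : ℝ))
      atTop (nhds (δ / (1 - 2 * δ))) := by
  have hδ1 : δ < 1 := by linarith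
  have hkn : ∀ j, d j - 1 ≤ N j - 1 := fun j => Nat.sub_le_sub_right (hdN j) 1
  have hN : Tendsto (fun j => (N j : ℝ)) atTop atTop :=
    tendsto_natCast_atTop_atTop.comp (tendsto_atTop_mono hdN hd)
  have hgap : Tendsto (fun j => (N j : ℝ) - d j) atTop atTop :=
    tendsto_sub_atTop_of_tendsto_div hN hδ hδ1
  have hcast : ∀ j, ((N j - 1 : ℕ) : ℝ) - (d j - 1 : ℕ) + 1 = N j - d j + 1 := fun j => by
    rw [Nat.cast_pred (hpos j), Nat.cast_pred ((hpos j).trans_le (hdN j))]; ring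
  rw [show δ / (1 - 2 * δ) = δ / (1 - δ) / (1 - δ / (1 - δ)) by
    field_simp [show (1 : ℝ) - δ ≠ 0 by linarith]; ring]
  simp only [sum_range_choose_div_choose (hkn _)]
  refine tendsto_tsum_chooseRatio hkn ?_ ?_ (div_nonneg hδ0 (by linarith))
    ((div_lt_one (by linarith)).2 (by linarith))
  · simpa only [hcast] using tendsto_atTop_add_const_right _ 1 hgap
  · simp only [hcast]
    simp only [Nat.cast_pred (hpos _)]
    exact tendsto_sub_div_add_of_tendsto_div hgap (tendsto_div_sub_of_tendsto_div hN hδ hδ1.ne) 1 1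
end
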